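/- arXiv:1811.04538 — 2 statements merged into one kernel-verified Lean document; each statement's English description precedes it below -/
import Mathlib

section
/- Let L be a field with a valuation ν extending the q-adic valuation on K = κ((q)) (κ a field), and suppose L = T(q^{1/m}) where T/K is unramified. If a K-derivation D extends ν-integrally to T and D(q^{1/m}) = 0, then the unique extension of D to L is ν-integral, i.e., ν(D(s)) ≥ ν(s) for all s ∈ L. -/
/-!
Elements of `L` are sums `∑ tᵢ uⁱ` whose terms all have valuation at most that of the sum.
Since `D` kills `u`, the Leibniz rule gives `D (∑ tᵢ uⁱ) = ∑ uⁱ D tᵢ`, and each term satisfies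
`v (uⁱ D tᵢ) ≤ v (tᵢ uⁱ)` by integrality on `T`; the ultrametric inequality concludes.
-/

section Leibniz

variable {R : Type*} [CommRing R] {D : R → R}

theorem leibniz_map_one (hmul : ∀ a b : R, D (a * b) = a * D b + b * D a) : D 1 = 0 := by
  have h := hmul 1 1
  rw [mul_one, one_mul] at h
  linear_combination -h

theorem leibniz_map_pow_eq_zero (hmul : ∀ a b : R, D (a * b) = a * D b + b * D a) {u : R}
    (hu : D u = 0) (n : ℕ) : D (u ^ n) = 0 := by
  induction n with
  | zero => rw [pow_zero, leibniz_map_one hmul]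
  | succ n ih => rw [pow_succ, hmul, ih, hu, mul_zero, mul_zero, add_zero]

theorem leibniz_map_sum_mul_of_map_eq_zero (hadd : ∀ a b : R, D (a + b) = D a + D b)
    (hmul : ∀ a b : R, D (a * b) = a * D b + b * D a) {ι : Type*} (s : Finset ι) {t w : ι → R}
    (hw : ∀ i ∈ s, D (w i) = 0) : D (∑ i ∈ s, t i * w i) = ∑ i ∈ s, w i * D (t i) := by
  refine (map_sum (AddMonoidHom.mk' D hadd) _ s).trans (Finset.sum_congr rfl fun i hi => ?_)
  rw [AddMonoidHom.mk'_apply, hmul, hw i hi, mul_zero, zero_add]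

end Leibniz

theorem IsNonarchimedean.apply_sum_le_of_forall_le {R : Type*} [Semiring R]
    (v : AbsoluteValue R ℝ) (hna : IsNonarchimedean v) {ι : Type*} {s : Finset ι} {f : ι → R}
    {c : ℝ} (hc : 0 ≤ c) (hf : ∀ i ∈ s, v (f i) ≤ c) : v (∑ i ∈ s, f i) ≤ c :=
  Finset.sum_induction f (fun x => v x ≤ c) (fun a b ha hb => (hna a b).trans (max_le ha hb))
    (by rwa [map_zero]) hf

theorem abv_leibniz_le_of_eq_sum_mul {R : Type*} [CommRing R] (v : AbsoluteValue R ℝ)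
    (hna : IsNonarchimedean v) {D : R → R} (hadd : ∀ a b : R, D (a + b) = D a + D b)
    (hmul : ∀ a b : R, D (a * b) = a * D b + b * D a) {ι : Type*} {s : Finset ι} {t w : ι → R}
    (hw : ∀ i ∈ s, D (w i) = 0) (ht : ∀ i ∈ s, v (D (t i)) ≤ v (t i)) {x : R}
    (hx : x = ∑ i ∈ s, t i * w i) (hdom : ∀ i ∈ s, v (t i * w i) ≤ v x) : v (D x) ≤ v x := by
  rw [hx, leibniz_map_sum_mul_of_map_eq_zero hadd hmul s hw, ← hx]
  refine hna.apply_sum_le_of_forall_le v (v.nonneg x) fun i hi => ?_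
  calc v (w i * D (t i)) = v (w i) * v (D (t i)) := map_mul v _ _
    _ ≤ v (w i) * v (t i) := mul_le_mul_of_nonneg_left (ht i hi) (v.nonneg _)
    _ = v (t i * w i) := by rw [map_mul, mul_comm]
    _ ≤ v x := hdom i hi

/-- The valuation `ν` is recorded multiplicatively by `v`, so `ν(a) ≥ ν(b)` reads `v a ≤ v b`;
`u` plays the role of `q^{1/m}`. -/
theorem derivation_integral_on_tame_extension_general
    (L : Type*) [Field L] (v : AbsoluteValue L ℝ)
    (hna : ∀ a b : L, v (a + b) ≤ max (v a) (v b))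
    (T : Subfield L) (u : L) (m : ℕ)
    (D : L → L)
    (hadd : ∀ a b : L, D (a + b) = D a + D b)
    (hmul : ∀ a b : L, D (a * b) = a * D b + b * D a)
    (hint : ∀ t ∈ T, v (D t) ≤ v t)
    (hDu : D u = 0)
    (hdecomp : ∀ s : L, ∃ t : Fin m → L,
      (∀ i, t i ∈ T) ∧ s = ∑ i : Fin m, t i * u ^ (i : ℕ) ∧
      ∀ i : Fin m, v (t i * u ^ (i : ℕ)) ≤ v s) :
    ∀ s : L, v (D s) ≤ v s := by
  intro s
  obtain ⟨t, htT, hs, hdom⟩ := hdecomp s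
  exact abv_leibniz_le_of_eq_sum_mul v hna hadd hmul (w := fun i : Fin m => u ^ (i : ℕ))
    (fun i _ => leibniz_map_pow_eq_zero hmul hDu i) (fun i _ => hint (t i) (htT i)) hs
    (fun i _ => hdom i)

/-- Let `L` be a valued field (valuation recorded multiplicatively as a
nonarchimedean absolute value `v`, so that `ν(a) ≥ ν(b)` corresponds to `v a ≤ v b`),
`T ⊆ L` a subfield, `u ∈ L` (playing the role of `q^{1/m}`) and `m ≥ 1`, such that every
element `s` of `L` can be written `s = ∑_{i<m} tᵢ uⁱ` with `tᵢ ∈ T` and, the terms having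
pairwise distinct valuations, `v (tᵢ uⁱ) ≤ v s` for all `i`.  If the derivation `D`
is `ν`-integral on `T` and kills `u`, then `D` is `ν`-integral on all of `L`. -/
theorem derivation_integral_on_tame_extension
    (L : Type*) [Field L] (v : AbsoluteValue L ℝ)
    (hna : ∀ a b : L, v (a + b) ≤ max (v a) (v b))
    (T : Subfield L) (u : L) (m : ℕ) (hm : 1 ≤ m)
    (D : L → L)
    (hadd : ∀ a b : L, D (a + b) = D a + D b)
    (hmul : ∀ a b : L, D (a * b) = a * D b + b * D a)
    (hDT : ∀ t ∈ T, D t ∈ T)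
    (hint : ∀ t ∈ T, v (D t) ≤ v t)
    (hDu : D u = 0)
    (hdecomp : ∀ s : L, ∃ t : Fin m → L,
      (∀ i, t i ∈ T) ∧ s = ∑ i : Fin m, t i * u ^ (i : ℕ) ∧
      ∀ i : Fin m, v (t i * u ^ (i : ℕ)) ≤ v s) :
    ∀ s : L, v (D s) ≤ v s :=
  derivation_integral_on_tame_extension_general L v hna T u m D hadd hmul hint hDu hdecomp
end

section
/- Let σ: G → GL_r(ℂ) and τ: G → GL_r(ℂ[q]/(q^{m+1})) be representations of a group G with τ ≡ σ mod q^m, and suppose τ is conjugate to σ by some A ∈ GL_r(ℂ[q]/(q^{m+1})). Then there exists a matrix M ∈ M_r(ℂ) such that (I + q^m M)⁻¹ τ (I + q^m M) = σ. -/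
/-!
Since `τ ≡ σ mod q^m`, the reduction `Ā` of `A` modulo `q^m` commutes with every `σ g`. Applying
a `ℂ`-linear section of the reduction `ℂ[q]/(q^{m+1}) → ℂ[q]/(q^m)` entrywise to `Ā` gives a
matrix `B` lifting `Ā` that still commutes with the constant matrices `σ g`; for `m ≥ 1` it is
invertible because the kernel `q^m ℂ` of the reduction is square-zero. Then `u = A B⁻¹` conjugates
`σ` to `τ` and reduces to `1`, so `u = 1 + q^m M` with `M` constant. For `m = 0` the ring
`ℂ[q]/(q^0)` is trivial and `u = A` already works.
-/

open Polynomial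

noncomputable section

/-- `ℂ[q]/(q^m)` -/
abbrev QuotRing (m : ℕ) : Type :=
  Polynomial ℂ ⧸ Ideal.span {(Polynomial.X : Polynomial ℂ) ^ m}


/-- the class of `q^k` in `ℂ[q]/(q^m)` -/
def qpow (m k : ℕ) : QuotRing m :=
  Ideal.Quotient.mk _ ((Polynomial.X : Polynomial ℂ) ^ k)

/-- reduction `ℂ[q]/(q^{m+1}) → ℂ[q]/(q^m)` -/
def redQuot (m : ℕ) : QuotRing (m + 1) →+* QuotRing m :=
  Ideal.Quotient.factor
    (Ideal.span_singleton_le_span_singleton.mpr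
      (pow_dvd_pow (Polynomial.X : Polynomial ℂ) (Nat.le_succ m)))

lemma Matrix.map_linearMap_mul_map_algebraMap {K R S l m n : Type*} [CommSemiring K]
    [Semiring R] [Semiring S] [Algebra K R] [Algebra K S] [Fintype m]
    (s : S →ₗ[K] R) (X : Matrix l m S) (C : Matrix m n K) :
    (X * C.map (algebraMap K S)).map s = X.map s * C.map (algebraMap K R) := by
  ext i j
  simp only [Matrix.map_apply, Matrix.mul_apply, ← Algebra.commutes, ← Algebra.smul_def,
    map_sum, map_smul]

lemma Matrix.map_linearMap_map_algebraMap_mul {K R S l m n : Type*} [CommSemiring K]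
    [Semiring R] [Semiring S] [Algebra K R] [Algebra K S] [Fintype m]
    (s : S →ₗ[K] R) (C : Matrix l m K) (X : Matrix m n S) :
    (C.map (algebraMap K S) * X).map s = C.map (algebraMap K R) * X.map s := by
  ext i j
  simp only [Matrix.map_apply, Matrix.mul_apply, ← Algebra.smul_def, map_sum, map_smul]

lemma Matrix.exists_map_eq_forall_commute_of_surjective {K R S n : Type*} [Field K] [Ring R]
    [Ring S] [Algebra K R] [Algebra K S] [Fintype n]
    (f : R →ₐ[K] S) (hf : Function.Surjective f) (A : Matrix n n R) :
    ∃ B : Matrix n n R, B.map f = A.map f ∧ ∀ C : Matrix n n K,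
      Commute (A.map f) (C.map (algebraMap K S)) → Commute B (C.map (algebraMap K R)) := by
  obtain ⟨s, hs⟩ := f.toLinearMap.exists_rightInverse_of_surjective (LinearMap.range_eq_top.2 hf)
  refine ⟨(A.map f).map s, ?_, fun C hC => ?_⟩
  · ext i j
    exact LinearMap.congr_fun hs _
  · rw [commute_iff_eq, ← Matrix.map_linearMap_mul_map_algebraMap,
      ← Matrix.map_linearMap_map_algebraMap_mul, hC.eq]

lemma Matrix.isUnit_of_map_eq_of_isNilpotent_ker {R S n : Type*} [CommRing R] [CommRing S]
    [Fintype n] [DecidableEq n] (f : R →+* S) (hnil : ∀ x, f x = 0 → IsNilpotent x)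
    {A B : Matrix n n R} (hA : IsUnit A) (h : B.map f = A.map f) : IsUnit B := by
  rw [Matrix.isUnit_iff_isUnit_det] at hA ⊢
  have hdet : f (B.det - A.det) = 0 := by
    rw [map_sub, f.map_det, f.map_det, RingHom.mapMatrix_apply, RingHom.mapMatrix_apply, h,
      sub_self]
  simpa using (hnil _ hdet).isUnit_add_left_of_commute hA (Commute.all _ _)

theorem exists_conj_eq_and_map_eq_one {K R S n ι : Type*} [Field K] [CommRing R] [CommRing S]
    [Algebra K R] [Algebra K S] [Fintype n] [DecidableEq n] (f : R →ₐ[K] S)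
    (hf : Function.Surjective f) (hnil : ∀ x, f x = 0 → IsNilpotent x)
    (σ : ι → GL n K) (τ : ι → GL n R)
    (hred : ∀ i, Units.map (f : R →+* S).mapMatrix.toMonoidHom (τ i)
      = Units.map (algebraMap K S).mapMatrix.toMonoidHom (σ i))
    (A : GL n R)
    (hconj : ∀ i, τ i = A * Units.map (algebraMap K R).mapMatrix.toMonoidHom (σ i) * A⁻¹) :
    ∃ u : GL n R, (u : Matrix n n R).map f = 1 ∧
      ∀ i, τ i = u * Units.map (algebraMap K R).mapMatrix.toMonoidHom (σ i) * u⁻¹ := by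
  have hcomm : ∀ i, Commute ((A : Matrix n n R).map f)
      ((σ i : Matrix n n K).map (algebraMap K S)) := by
    intro i
    have h := congrArg (fun U : GL n R => ((U : Matrix n n R)).map f)
      (eq_mul_inv_iff_mul_eq.mp (hconj i))
    have hτ := congrArg Units.val (hred i)
    simp only [Units.val_mul, Units.coe_map, RingHom.toMonoidHom_eq_coe, MonoidHom.coe_coe,
      RingHom.mapMatrix_apply, Matrix.map_mul, Matrix.map_map, Function.comp_def, AlgHom.commutes,
      RingHom.coe_coe] at h hτ
    rw [hτ] at h
    exact h.symm
  obtain ⟨B, hBA, hB⟩ := Matrix.exists_map_eq_forall_commute_of_surjective f hf (A : Matrix n n R)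
  have hBunit : IsUnit B :=
    Matrix.isUnit_of_map_eq_of_isNilpotent_ker (f : R →+* S) hnil A.isUnit hBA
  refine ⟨A * hBunit.unit⁻¹, ?_, fun i => ?_⟩
  · rw [Units.val_mul, Matrix.map_mul, ← hBA, ← Matrix.map_mul, hBunit.mul_val_inv,
      Matrix.map_one _ (map_zero f) (map_one f)]
  · have hc : Commute hBunit.unit (Units.map (algebraMap K R).mapMatrix.toMonoidHom (σ i)) :=
      Units.ext (hB _ (hcomm i))
    rw [hconj i, mul_inv_rev, inv_inv, mul_assoc A hBunit.unit⁻¹, hc.inv_left.eq]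
    group

lemma qpow_add (n a b : ℕ) : qpow n (a + b) = qpow n a * qpow n b := by
  simp only [qpow, pow_add, map_mul]

lemma qpow_eq_zero {n k : ℕ} (h : n ≤ k) : qpow n k = 0 :=
  Ideal.Quotient.eq_zero_iff_mem.2 (Ideal.mem_span_singleton.2 (pow_dvd_pow _ h))

instance : Subsingleton (QuotRing 0) :=
  Ideal.Quotient.subsingleton_iff.2 (by rw [pow_zero, Ideal.span_singleton_one])

lemma redQuot_surjective (m : ℕ) : Function.Surjective (redQuot m) :=
  Ideal.Quotient.factor_surjective _

def redQuotAlgHom (m : ℕ) : QuotRing (m + 1) →ₐ[ℂ] QuotRing m :=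
  { redQuot m with commutes' := fun _ => rfl }

lemma exists_eq_qpow_mul_algebraMap_of_redQuot_eq_zero {m : ℕ} {x : QuotRing (m + 1)}
    (hx : redQuot m x = 0) : ∃ c : ℂ, x = qpow (m + 1) m * algebraMap ℂ _ c := by
  obtain ⟨p, rfl⟩ := Ideal.Quotient.mk_surjective x
  obtain ⟨p, rfl⟩ := Ideal.mem_span_singleton.1 (Ideal.Quotient.eq_zero_iff_mem.1 hx)
  refine ⟨p.coeff 0, Ideal.Quotient.eq.2 (Ideal.mem_span_singleton.2 ?_)⟩
  change X ^ (m + 1) ∣ X ^ m * p - X ^ m * C (p.coeff 0)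
  rw [← mul_sub, pow_succ]
  exact mul_dvd_mul_left _ (X_dvd_iff.2 (by simp))

lemma isNilpotent_of_redQuot_eq_zero {m : ℕ} (hm : 1 ≤ m) {x : QuotRing (m + 1)}
    (hx : redQuot m x = 0) : IsNilpotent x := by
  obtain ⟨c, rfl⟩ := exists_eq_qpow_mul_algebraMap_of_redQuot_eq_zero hx
  exact ⟨2, by rw [mul_pow, sq (qpow _ m), ← qpow_add, qpow_eq_zero (by omega), zero_mul]⟩

lemma Matrix.eq_one_add_qpow_smul_of_map_redQuot_eq_one {r m : ℕ}
    {U : Matrix (Fin r) (Fin r) (QuotRing (m + 1))} (hU : U.map (redQuot m) = 1) :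
    ∃ M : Matrix (Fin r) (Fin r) ℂ, U = 1 + qpow (m + 1) m • M.map (algebraMap ℂ _) := by
  have hker : (redQuot m).mapMatrix (U - 1) = 0 := by
    rw [map_sub, map_one, RingHom.mapMatrix_apply, hU, sub_self]
  choose M hM using fun i j => exists_eq_qpow_mul_algebraMap_of_redQuot_eq_zero
    (congrFun₂ hker i j)
  refine ⟨Matrix.of M, ?_⟩
  ext i j
  simpa [sub_eq_iff_eq_add'] using hM i j

/-- if `σ : G → GL_r(ℂ)` and `τ : G → GL_r(ℂ[q]/(q^{m+1}))` satisfy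
`τ ≡ σ mod q^m` and `τ` is conjugate to (the constant extension of) `σ` by some
`A ∈ GL_r(ℂ[q]/(q^{m+1}))`, then they are conjugate by a matrix of the form
`I + q^m M` with `M` a constant complex matrix. -/
theorem conjugating_matrix_normal_form
    (G : Type*) [Group G] (r m : ℕ)
    (σ : G →* GL (Fin r) ℂ)
    (τ : G →* GL (Fin r) (QuotRing (m + 1)))
    (hcongr : ∀ g : G,
      Units.map ((redQuot m).mapMatrix.toMonoidHom) (τ g)
        = Units.map ((algebraMap ℂ (QuotRing m)).mapMatrix.toMonoidHom) (σ g))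
    (A : GL (Fin r) (QuotRing (m + 1)))
    (hconj : ∀ g : G, τ g = A * Units.map
        ((algebraMap ℂ (QuotRing (m + 1))).mapMatrix.toMonoidHom) (σ g) * A⁻¹) :
    ∃ (M : Matrix (Fin r) (Fin r) ℂ) (u : GL (Fin r) (QuotRing (m + 1))),
      (u : Matrix (Fin r) (Fin r) (QuotRing (m + 1)))
        = 1 + qpow (m + 1) m • (M.map (algebraMap ℂ (QuotRing (m + 1)))) ∧
      ∀ g : G, τ g = u * Units.map
        ((algebraMap ℂ (QuotRing (m + 1))).mapMatrix.toMonoidHom) (σ g) * u⁻¹ := by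
  obtain ⟨u, hu_red, hu_conj⟩ : ∃ u : GL (Fin r) (QuotRing (m + 1)),
      (u : Matrix (Fin r) (Fin r) (QuotRing (m + 1))).map (redQuot m) = 1 ∧
      ∀ g : G, τ g = u * Units.map
        ((algebraMap ℂ (QuotRing (m + 1))).mapMatrix.toMonoidHom) (σ g) * u⁻¹ := by
    rcases Nat.eq_zero_or_pos m with rfl | hm
    · exact ⟨A, Subsingleton.elim _ _, hconj⟩
    · exact exists_conj_eq_and_map_eq_one (redQuotAlgHom m) (redQuot_surjective m)
        (fun _ => isNilpotent_of_redQuot_eq_zero hm) σ τ hcongr A hconj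
  obtain ⟨M, hM⟩ := Matrix.eq_one_add_qpow_smul_of_map_redQuot_eq_one hu_red
  exact ⟨M, u, hM, hu_conj⟩

end
end
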